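/- Let G be the 2-edge-colored graph with vertices v_1,…,v_8, blue edges v_2v_3, v_4v_5, v_6v_7 and red edges v_1v_2, v_1v_3, v_1v_5, v_2v_6, v_3v_4, v_4v_6, v_5v_8, v_7v_8, and let x = v_1, y = v_8. Then G is PC acyclic of type 3, the maximum number of internally vertex-disjoint PC paths between x and y is 1, yet for every vertex v ∉ {x,y} the graph G − v still contains a PC path between x and y (so no single-vertex set separates all PC x–y paths, and Menger's equality fails for PC paths on graphs that are PC acyclic of type 3). -/

import Mathlib

open SimpleGraph

variable {V : Type*} {c : ℕ}

/-- The list of colors of the edges of a walk, in order. -/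
def colorList (G : SimpleGraph V) (col : V → V → Fin c) {u v : V} (w : G.Walk u v) :
    List (Fin c) :=
  w.darts.map fun d => col d.toProd.1 d.toProd.2

/-- A walk is properly colored (as an open walk): consecutive edges have different colors. -/
def IsPCOpen (G : SimpleGraph V) (col : V → V → Fin c) {u v : V} (w : G.Walk u v) : Prop :=
  (colorList G col w).Chain' (· ≠ ·)

/-- A closed walk is properly colored: consecutive edges have different colors,
including the last versus the first edge. -/
def IsPCClosed (G : SimpleGraph V) (col : V → V → Fin c) {u : V} (w : G.Walk u u) : Prop :=
  (colorList G col w ++ (colorList G col w).take 1).Chain' (· ≠ ·)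

/-- `G` (with coloring `col`) has a properly colored cycle. -/
def HasPCCycle (G : SimpleGraph V) (col : V → V → Fin c) : Prop :=
  ∃ (u : V) (w : G.Walk u u), w.IsCycle ∧ IsPCClosed G col w

/-- `G` (with coloring `col`) has a properly colored closed trail. -/
def HasPCClosedTrail (G : SimpleGraph V) (col : V → V → Fin c) : Prop :=
  ∃ (u : V) (w : G.Walk u u), w.IsCircuit ∧ IsPCClosed G col w

/-- `G` (with coloring `col`) has a properly colored closed walk. -/
def HasPCClosedWalk (G : SimpleGraph V) (col : V → V → Fin c) : Prop :=
  ∃ (u : V) (w : G.Walk u u), 0 < w.length ∧ IsPCClosed G col w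

/-- A vertex all of whose incident edges have the same color. -/
def MonoVertex (G : SimpleGraph V) (col : V → V → Fin c) (z : V) : Prop :=
  ∀ v w, G.Adj z v → G.Adj z w → col z v = col z w

/-- An ordering (given by an injective ranking `r`) is of type 1 if every vertex sends
edges of only one color into each connected component of the subgraph induced by the
later vertices. -/
def Ordering1 (G : SimpleGraph V) (col : V → V → Fin c) (r : V → ℕ) : Prop :=
  ∀ (u v w : V) (hv : G.Adj u v) (hw : G.Adj u w) (hrv : r u < r v) (hrw : r u < r w),
    (G.induce {x | r u < r x}).Reachable ⟨v, hrv⟩ ⟨w, hrw⟩ → col u v = col u w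

/-- Type 2: all edges from a vertex to later vertices which are not bridges in the
subgraph induced by the vertex together with the later vertices have the same color. -/
def Ordering2 (G : SimpleGraph V) (col : V → V → Fin c) (r : V → ℕ) : Prop :=
  ∀ (u v w : V) (hv : G.Adj u v) (hw : G.Adj u w) (hrv : r u < r v) (hrw : r u < r w),
    ¬ (G.induce {x | r u ≤ r x}).IsBridge s(⟨u, le_refl (r u)⟩, ⟨v, hrv.le⟩) →
    ¬ (G.induce {x | r u ≤ r x}).IsBridge s(⟨u, le_refl (r u)⟩, ⟨w, hrw.le⟩) →
    col u v = col u w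

/-- Type 3: all edges from a vertex to later vertices have the same color. -/
def Ordering3 (G : SimpleGraph V) (col : V → V → Fin c) (r : V → ℕ) : Prop :=
  ∀ u v w : V, G.Adj u v → G.Adj u w → r u < r v → r u < r w → col u v = col u w

/-- Type 4: all edges to later vertices have the same color and all edges to earlier
vertices have the same color. -/
def Ordering4 (G : SimpleGraph V) (col : V → V → Fin c) (r : V → ℕ) : Prop :=
  Ordering3 G col r ∧
    ∀ u v w : V, G.Adj u v → G.Adj u w → r v < r u → r w < r u → col u v = col u w

/-- Type 5: type 4, and additionally the color towards earlier vertices differs from the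
color towards later vertices. -/
def Ordering5 (G : SimpleGraph V) (col : V → V → Fin c) (r : V → ℕ) : Prop :=
  Ordering4 G col r ∧
    ∀ u v w : V, G.Adj u v → G.Adj u w → r v < r u → r u < r w → col u v ≠ col u w

def PCAcyclic1 (G : SimpleGraph V) (col : V → V → Fin c) : Prop :=
  ∃ r : V → ℕ, Function.Injective r ∧ Ordering1 G col r

def PCAcyclic2 (G : SimpleGraph V) (col : V → V → Fin c) : Prop :=
  ∃ r : V → ℕ, Function.Injective r ∧ Ordering2 G col r

def PCAcyclic3 (G : SimpleGraph V) (col : V → V → Fin c) : Prop :=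
  ∃ r : V → ℕ, Function.Injective r ∧ Ordering3 G col r

def PCAcyclic4 (G : SimpleGraph V) (col : V → V → Fin c) : Prop :=
  ∃ r : V → ℕ, Function.Injective r ∧ Ordering4 G col r

def PCAcyclic5 (G : SimpleGraph V) (col : V → V → Fin c) : Prop :=
  ∃ r : V → ℕ, Function.Injective r ∧ Ordering5 G col r

/-- The number of `C`-monochromatic vertices of a closed walk `C`: vertices whose two
incident edges on `C` (cyclically) have the same color. -/
def monoCount (G : SimpleGraph V) (col : V → V → Fin c) {u : V} (w : G.Walk u u) : ℕ :=
  ((colorList G col w ++ (colorList G col w).take 1).zip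
      (colorList G col w ++ (colorList G col w).take 1).tail).countP
    fun p => decide (p.1 = p.2)

/-- The number of vertices of a closed walk `C` that are not `C`-monochromatic. -/
def nonMonoCount (G : SimpleGraph V) (col : V → V → Fin c) {u : V} (w : G.Walk u u) : ℕ :=
  ((colorList G col w ++ (colorList G col w).take 1).zip
      (colorList G col w ++ (colorList G col w).take 1).tail).countP
    fun p => decide (p.1 ≠ p.2)

/-- The graph on vertices `v₁, …, v₈` (encoded as `0, …, 7 : Fin 8`) with blue edges
`v₂v₃, v₄v₅, v₆v₇` and red edges `v₁v₂, v₁v₃, v₁v₅, v₂v₆, v₃v₄, v₄v₆, v₅v₈, v₇v₈`. -/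
def G18 : SimpleGraph (Fin 8) :=
  SimpleGraph.fromEdgeSet
    {s(1, 2), s(3, 4), s(5, 6),
     s(0, 1), s(0, 2), s(0, 4), s(1, 5), s(2, 3), s(3, 5), s(4, 7), s(6, 7)}

/-- Blue is color `1`, red is color `0`. -/
def col18 : Fin 8 → Fin 8 → Fin 2 := fun a b =>
  if s(a, b) = s(1, 2) ∨ s(a, b) = s(3, 4) ∨ s(a, b) = s(5, 6) then 1 else 0

/-!
A depth-first enumeration of the paths starting at `v₁` shows that the PC `v₁`–`v₈` paths are
exactly `v₁v₂v₃v₄v₅v₈`, `v₁v₃v₂v₆v₇v₈`, `v₁v₅v₄v₃v₂v₆v₇v₈` and `v₁v₅v₄v₆v₇v₈`. Any two of them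
meet in an inner vertex, so at most one of them can be chosen; yet each inner vertex is missed
by one of them (`v₂, v₃` by the last, `v₄, v₅` by the second, `v₆, v₇` by the first).
-/

instance {G : SimpleGraph V} {col : V → V → Fin c} {u v : V} (p : G.Walk u v) :
    Decidable (IsPCOpen G col p) :=
  inferInstanceAs (Decidable ((colorList G col p).IsChain _))

instance [Fintype V] {G : SimpleGraph V} [DecidableRel G.Adj] {col : V → V → Fin c}
    {r : V → ℕ} : Decidable (Ordering3 G col r) := by
  unfold Ordering3; infer_instance

theorem colorList_eq_map_zip_support (G : SimpleGraph V) (col : V → V → Fin c) {u v : V}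
    (p : G.Walk u v) :
    colorList G col p = (p.support.zip p.support.tail).map fun e => col e.1 e.2 := by
  induction p with
  | nil => rfl
  | cons h p ih =>
    have hs := p.cons_tail_support.symm
    change col _ _ :: colorList G col p = _
    rw [ih, Walk.support_cons, List.tail_cons, hs]
    rfl

namespace SimpleGraph

variable {n : ℕ} (G : SimpleGraph (Fin n)) [DecidableRel G.Adj]

def pathSupports : ℕ → Fin n → List (Fin n) → List (List (Fin n))
  | 0, u, _ => [[u]]
  | k + 1, u, avoid => [u] :: (List.finRange n).flatMap fun a =>
      if G.Adj u a ∧ a ∉ avoid then (pathSupports k a (u :: avoid)).map (u :: ·) else []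

theorem support_mem_pathSupports {k : ℕ} {u v : Fin n} {p : G.Walk u v} {avoid : List (Fin n)}
    (hk : p.length ≤ k) (hp : p.IsPath) (havoid : ∀ x ∈ avoid, x ∉ p.support) :
    p.support ∈ G.pathSupports k u avoid := by
  induction k generalizing u avoid with
  | zero => cases p with
    | nil => simp [pathSupports]
    | cons => simp at hk
  | succ k ih => cases p with
    | nil => simp [pathSupports]
    | @cons _ b _ h q =>
      rw [Walk.cons_isPath_iff] at hp
      have hb : b ∉ avoid := fun hb => havoid b hb (by simp)
      simp only [pathSupports, Walk.support_cons, List.mem_cons, List.mem_flatMap]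
      refine Or.inr ⟨b, List.mem_finRange _, ?_⟩
      rw [if_pos ⟨h, hb⟩]
      refine List.mem_map_of_mem (ih (by simpa using hk) hp.1 ?_)
      intro x hx
      rcases List.mem_cons.mp hx with rfl | hx
      · exact hp.2
      · exact fun hq => havoid x hx (by simp [hq])

end SimpleGraph

instance : DecidableRel G18.Adj := fun a b =>
  inferInstanceAs (Decidable (s(a, b) ∈ ({s(1, 2), s(3, 4), s(5, 6),
     s(0, 1), s(0, 2), s(0, 4), s(1, 5), s(2, 3), s(3, 5), s(4, 7), s(6, 7)} :
       Set (Sym2 (Fin 8))) ∧ a ≠ b))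

theorem pcAcyclic3_G18 : PCAcyclic3 G18 col18 :=
  -- the positions of `v₁, …, v₈` in the ordering `v₁, v₈, v₅, v₄, v₃, v₂, v₆, v₇`
  ⟨![0, 5, 4, 3, 2, 6, 7, 1], by decide, by decide⟩

def pcPaths18 : List (G18.Walk 0 7) :=
  [.cons (v := 1) (by decide) <| .cons (v := 2) (by decide) <| .cons (v := 3) (by decide) <|
      .cons (v := 4) (by decide) <| .cons (by decide) .nil,
    .cons (v := 2) (by decide) <| .cons (v := 1) (by decide) <| .cons (v := 5) (by decide) <|
      .cons (v := 6) (by decide) <| .cons (by decide) .nil,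
    .cons (v := 4) (by decide) <| .cons (v := 3) (by decide) <| .cons (v := 2) (by decide) <|
      .cons (v := 1) (by decide) <| .cons (v := 5) (by decide) <| .cons (v := 6) (by decide) <|
      .cons (by decide) .nil,
    .cons (v := 4) (by decide) <| .cons (v := 3) (by decide) <| .cons (v := 5) (by decide) <|
      .cons (v := 6) (by decide) <| .cons (by decide) .nil]

theorem isPath_and_isPCOpen_iff_mem_pcPaths18 {p : G18.Walk 0 7} :
    p.IsPath ∧ IsPCOpen G18 col18 p ↔ p ∈ pcPaths18 := by
  constructor
  · rintro ⟨hp, hpc⟩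
    have hlen : p.length ≤ 7 := Nat.le_of_lt_succ (by simpa using hp.length_lt)
    have hmem := G18.support_mem_pathSupports hlen hp (avoid := []) (by simp)
    have hlast : p.support.getLast? = some 7 := by simp [List.getLast?_eq_some_getLast]
    rw [IsPCOpen, colorList_eq_map_zip_support] at hpc
    have classify : ∀ l ∈ G18.pathSupports 7 0 [], l.getLast? = some 7 →
        ((l.zip l.tail).map fun e => col18 e.1 e.2).IsChain (· ≠ ·) →
        l ∈ pcPaths18.map Walk.support := by
      decide
    obtain ⟨q, hq, hqp⟩ := List.mem_map.mp (classify _ hmem hlast hpc)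
    exact Walk.ext_support hqp ▸ hq
  · intro hp
    have : ∀ q ∈ pcPaths18, q.support.Nodup ∧ IsPCOpen G18 col18 q := by decide
    exact ⟨(Walk.isPath_def p).2 (this p hp).1, (this p hp).2⟩

theorem pcPaths18_support_meet : ∀ p ∈ pcPaths18, ∀ q ∈ pcPaths18,
    p.support ≠ q.support → ∃ v ∈ p.support, v ∈ q.support ∧ v ≠ 0 ∧ v ≠ 7 := by
  decide

theorem exists_mem_pcPaths18_not_mem_support : ∀ v : Fin 8, v ≠ 0 → v ≠ 7 →
    ∃ p ∈ pcPaths18, v ∉ p.support := by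
  decide

/-- With `x = v₁` and `y = v₈`, this 2-edge-colored graph is PC acyclic
of type 3; there is a PC path between `x` and `y` but no two distinct internally
vertex-disjoint PC paths between them; yet deleting any single vertex other than `x, y`
leaves a PC path between `x` and `y`.  Hence Menger's equality fails for PC paths on
graphs PC acyclic of type 3. -/
theorem menger_fails_type3_example :
    PCAcyclic3 G18 col18 ∧
      (∃ p : G18.Walk 0 7, p.IsPath ∧ IsPCOpen G18 col18 p) ∧
      (¬ ∃ p q : G18.Walk 0 7, p ≠ q ∧
          (p.IsPath ∧ IsPCOpen G18 col18 p) ∧ (q.IsPath ∧ IsPCOpen G18 col18 q) ∧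
          ∀ v : Fin 8, v ∈ p.support → v ∈ q.support → v = 0 ∨ v = 7) ∧
      ∀ v : Fin 8, v ≠ 0 → v ≠ 7 →
        ∃ p : G18.Walk 0 7, p.IsPath ∧ IsPCOpen G18 col18 p ∧ v ∉ p.support := by
  have avoiding (v : Fin 8) (hv0 : v ≠ 0) (hv7 : v ≠ 7) :
      ∃ p : G18.Walk 0 7, p.IsPath ∧ IsPCOpen G18 col18 p ∧ v ∉ p.support := by
    obtain ⟨p, hp, hvp⟩ := exists_mem_pcPaths18_not_mem_support v hv0 hv7
    obtain ⟨hpath, hpc⟩ := isPath_and_isPCOpen_iff_mem_pcPaths18.2 hp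
    exact ⟨p, hpath, hpc, hvp⟩
  refine ⟨pcAcyclic3_G18, ?_, ?_, avoiding⟩
  · exact ⟨_, isPath_and_isPCOpen_iff_mem_pcPaths18.2 List.mem_cons_self⟩
  · rintro ⟨p, q, hne, hp, hq, hdisj⟩
    obtain ⟨v, hvp, hvq, hv0, hv7⟩ := pcPaths18_support_meet p
      (isPath_and_isPCOpen_iff_mem_pcPaths18.1 hp) q (isPath_and_isPCOpen_iff_mem_pcPaths18.1 hq)
      (mt Walk.ext_support hne)
    exact (hdisj v hvp hvq).elim hv0 hv7
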